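/- arXiv:2104.09002 — 8 statements merged into one kernel-verified Lean document; each statement's English description precedes it below -/
import Mathlib

section
/- Suppose the convex hull of S⁺ has nonempty interior in ℝⁿ and let γ ∈ ℝ satisfy 0 ≤ γ < ‖c‖. Then the following are equivalent: (i) K(γ) ∩ D(x⁰) = ∅; (ii) conv(S⁺) ∩ interior(K*(γ)) ≠ ∅; (iii) ‖c − d‖ > γ for every d ∈ D(x⁰). -/
open scoped RealInnerProductSpace

open Set Topology

/-! The set `K = {d | N (c - d) ≤ γ}` is a closed ball of a norm on `ℝⁿ`, hence compact and convex,
and it misses `0`; `D(x⁰)` is the normal cone of `conv S⁺` at `x⁰`. If `K` misses `D(x⁰)`, a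
hyperplane separating them gives a vector that is positive on `K` and nonpositive on the cone
`D(x⁰)`, so it lies in the polar of `D(x⁰)`, the closure of the cone spanned by `conv S⁺ - x⁰`.
Positivity on the compact set `K` is an open condition, so some `z ∈ conv S⁺` already satisfies
`⟪d, z - x⁰⟫ > 0` for all `d ∈ K`, which puts `z` in the interior of `K*`. Conversely, if
`z ∈ conv S⁺` is interior to `K*` and `d ∈ K ∩ D(x⁰)`, pushing `z` slightly in direction `-d`
forces `‖d‖² ≤ 0`, contradicting `0 ∉ K`. -/

namespace Seminorm

variable {E : Type*} [NormedAddCommGroup E] [NormedSpace ℝ E] [FiniteDimensional ℝ E]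
  (p : Seminorm ℝ E)

theorem continuous_of_finiteDimensional : Continuous p :=
  p.convexOn.locallyLipschitz.continuous

theorem exists_pos_mul_norm_le_of_finiteDimensional (hp : ∀ x, p x = 0 → x = 0) :
    ∃ m > 0, ∀ x, m * ‖x‖ ≤ p x := by
  rcases subsingleton_or_nontrivial E with hE | hE
  · exact ⟨1, one_pos, fun x => by simp [Subsingleton.elim x 0]⟩
  obtain ⟨z, hz, hmin⟩ := (isCompact_sphere (0 : E) 1).exists_isMinOn
    (NormedSpace.sphere_nonempty.2 zero_le_one) p.continuous_of_finiteDimensional.continuousOn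
  have hz0 : z ≠ 0 := ne_zero_of_mem_unit_sphere ⟨z, hz⟩
  refine ⟨p z, (apply_nonneg p z).lt_of_ne' (mt (hp z) hz0), fun x => ?_⟩
  rcases eq_or_ne x 0 with rfl | hx
  · simp
  have hx' : 0 < ‖x‖ := norm_pos_iff.2 hx
  have hxz : p z ≤ p (‖x‖⁻¹ • x) := hmin (by simp [norm_smul, hx'.ne'])
  rwa [map_smul_eq_mul, norm_inv, norm_norm, le_inv_mul_iff₀ hx', mul_comm] at hxz

theorem isCompact_closedBall_of_finiteDimensional (hp : ∀ x, p x = 0 → x = 0) (c : E) (r : ℝ) :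
    IsCompact (p.closedBall c r) := by
  obtain ⟨m, hm, hpm⟩ := p.exists_pos_mul_norm_le_of_finiteDimensional hp
  refine (isCompact_closedBall c (r / m)).of_isClosed_subset ?_ fun y hy => ?_
  · exact isClosed_le (p.continuous_of_finiteDimensional.comp (continuous_id.sub continuous_const))
      continuous_const
  · rw [Metric.mem_closedBall, dist_eq_norm, le_div_iff₀ hm]
    linarith [hpm (y - c), (p.mem_closedBall).1 hy]

end Seminorm

section NormalCone

variable {E : Type*} [NormedAddCommGroup E] [InnerProductSpace ℝ E]

def normalCone (A : Set E) (x₀ : E) : Set E := {d | ∀ x ∈ A, ⟪d, x - x₀⟫ ≤ 0}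

variable {A K : Set E} {x₀ d z : E}

theorem zero_mem_normalCone : (0 : E) ∈ normalCone A x₀ := fun x _ => by simp

theorem smul_mem_normalCone {t : ℝ} (ht : 0 ≤ t) (hd : d ∈ normalCone A x₀) :
    t • d ∈ normalCone A x₀ := fun x hx => by
  rw [real_inner_smul_left]
  exact mul_nonpos_of_nonneg_of_nonpos ht (hd x hx)

theorem normalCone_eq_biInter : normalCone A x₀ = ⋂ x ∈ A, {d | ⟪d, x - x₀⟫ ≤ 0} := by
  ext; simp [normalCone]

theorem convex_normalCone : Convex ℝ (normalCone A x₀) := by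
  rw [normalCone_eq_biInter]
  exact convex_iInter₂ fun x _ => convex_halfSpace_le ((innerₗ E).flip (x - x₀)).isLinear 0

theorem isClosed_normalCone : IsClosed (normalCone A x₀) := by
  rw [normalCone_eq_biInter]
  exact isClosed_biInter fun _ _ =>
    isClosed_le (continuous_id.inner continuous_const) continuous_const

theorem normalCone_convexHull_union_singleton :
    normalCone (convexHull ℝ (A ∪ {x₀})) x₀ = normalCone A x₀ := by
  refine Subset.antisymm (fun d hd x hx => hd x (subset_convexHull ℝ _ (mem_union_left _ hx)))
    fun d hd x hx => ?_
  have hsub : A ∪ {x₀} ⊆ {y | ⟪d, y⟫ ≤ ⟪d, x₀⟫} := by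
    rintro y (hy | rfl)
    · simpa [inner_sub_right] using hd y hy
    · simp
  simpa [inner_sub_right] using convexHull_min hsub (convex_halfSpace_le (innerₗ E d).isLinear _) hx

theorem eq_zero_of_mem_normalCone_of_mem_interior (hd : d ∈ normalCone A x₀) (hz : z ∈ A)
    (hzd : z ∈ interior {x | ⟪d, x₀ - x⟫ ≤ 0}) : d = 0 := by
  have hnhds : ∀ᶠ ε in 𝓝 (0 : ℝ), z - ε • d ∈ {x | ⟪d, x₀ - x⟫ ≤ 0} :=
    (Continuous.tendsto' (by fun_prop) 0 z (by simp)).eventually (mem_interior_iff_mem_nhds.1 hzd)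
  obtain ⟨ε, hεd, hε⟩ :=
    ((hnhds.filter_mono nhdsWithin_le_nhds).and (self_mem_nhdsWithin (s := Ioi 0))).exists
  have hdz := hd z hz
  simp only [mem_ofPred_eq, inner_sub_right, inner_smul_right] at hεd hdz
  have hdd : ε * ⟪d, d⟫ ≤ 0 := by linarith
  exact real_inner_self_nonpos.1 (nonpos_of_mul_nonpos_right hdd hε)

theorem isOpen_setOf_forall_inner_pos (hK : IsCompact K) : IsOpen {w | ∀ k ∈ K, 0 < ⟪k, w⟫} :=
  isOpen_iff_mem_nhds.2 fun _ hw => hK.eventually_forall_of_forall_eventually fun k hk =>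
    (isOpen_lt continuous_const (continuous_snd.inner continuous_fst)).mem_nhds (hw k hk)

variable [CompleteSpace E]

theorem PointedCone.mem_closure_of_forall_inner_nonneg (P : PointedCone ℝ E) {y : E}
    (hy : ∀ d, (∀ w ∈ P, 0 ≤ ⟪w, d⟫) → 0 ≤ ⟪y, d⟫) : y ∈ closure (P : Set E) := by
  by_contra h
  have hy' : y ∉ Submodule.closure P := by
    rwa [Submodule.mem_closure_iff, ← SetLike.mem_coe, Submodule.topologicalClosure_coe]
  obtain ⟨d, hd, hyd⟩ := ProperCone.hyperplane_separation' _ hy'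
  exact hyd.not_ge (hy d fun w hw => hd w (subset_closure hw))

theorem exists_forall_inner_pos_of_disjoint_normalCone (hA : Convex ℝ A) (hx₀ : x₀ ∈ A)
    (hK : IsCompact K) (hKc : Convex ℝ K) (hKD : Disjoint K (normalCone A x₀)) :
    ∃ z ∈ A, ∀ k ∈ K, 0 < ⟪k, z - x₀⟫ := by
  obtain ⟨f, u, v, hfK, huv, hfD⟩ :=
    geometric_hahn_banach_compact_closed hKc hK convex_normalCone isClosed_normalCone hKD
  have hv : v < 0 := by simpa using hfD 0 zero_mem_normalCone
  have hfD' : ∀ d ∈ normalCone A x₀, 0 ≤ f d := by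
    intro d hd
    by_contra! hneg
    have ht : 0 ≤ (v - 1) / f d := div_nonneg_of_nonpos (by linarith) hneg.le
    have := hfD _ (smul_mem_normalCone ht hd)
    rw [map_smul, smul_eq_mul, div_mul_cancel₀ _ hneg.ne] at this
    linarith
  set y := (InnerProductSpace.toDual ℝ E).symm f
  have hy (x : E) : ⟪y, x⟫ = f x := InnerProductSpace.toDual_symm_apply
  have hAx₀ : Convex ℝ ((x₀ + ·) ⁻¹' A) := hA.translate_preimage_right x₀
  let P : PointedCone ℝ E :=
    (ConvexCone.hull ℝ ((x₀ + ·) ⁻¹' A)).toPointedCone (ConvexCone.subset_hull (by simpa))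
  have hyP : -y ∈ closure (P : Set E) := by
    refine P.mem_closure_of_forall_inner_nonneg fun d hd => ?_
    have hdD : -d ∈ normalCone A x₀ := fun x hx => by
      have := hd (x - x₀) (ConvexCone.subset_hull (by simpa))
      rw [inner_neg_left, real_inner_comm]
      linarith
    simpa [hy] using hfD' _ hdD
  have hyK : -y ∈ {w | ∀ k ∈ K, 0 < ⟪k, w⟫} := fun k hk => by
    rw [inner_neg_right, real_inner_comm, hy]
    linarith [hfK k hk]
  obtain ⟨w, hwK, hwP⟩ := mem_closure_iff.1 hyP _ (isOpen_setOf_forall_inner_pos hK) hyK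
  obtain ⟨r, hr, a, ha, rfl⟩ := (ConvexCone.mem_hull_of_convex hAx₀).1 hwP
  refine ⟨x₀ + a, ha, fun k hk => pos_of_mul_pos_right ?_ hr.le⟩
  simpa [inner_smul_right] using hwK k hk

theorem disjoint_normalCone_iff (hA : Convex ℝ A) (hx₀ : x₀ ∈ A) (hK : IsCompact K)
    (hKc : Convex ℝ K) (hK₀ : (0 : E) ∉ K) :
    Disjoint K (normalCone A x₀) ↔ (A ∩ interior {x | ∀ d ∈ K, ⟪d, x₀ - x⟫ ≤ 0}).Nonempty := by
  constructor
  · intro hKD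
    obtain ⟨z, hz, hzK⟩ := exists_forall_inner_pos_of_disjoint_normalCone hA hx₀ hK hKc hKD
    have hopen : IsOpen {x | ∀ k ∈ K, 0 < ⟪k, x - x₀⟫} :=
      (isOpen_setOf_forall_inner_pos hK).preimage (continuous_id.sub continuous_const)
    refine ⟨z, hz, interior_maximal (fun x hx d hd => ?_) hopen hzK⟩
    rw [← neg_sub, inner_neg_right]
    exact neg_nonpos.2 (hx d hd).le
  · rintro ⟨z, hz, hzK⟩
    refine disjoint_left.2 fun d hdK hdD => hK₀ ?_
    have hzd : z ∈ interior {x | ⟪d, x₀ - x⟫ ≤ 0} :=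
      interior_mono (s := {x | ∀ d ∈ K, ⟪d, x₀ - x⟫ ≤ 0}) (fun _ hx => hx d hdK) hzK
    rwa [← eq_zero_of_mem_normalCone_of_mem_interior hdD hz hzd]

end NormalCone

theorem stmt_0_general (n : ℕ)
    (S : Set (EuclideanSpace ℝ (Fin n)))
    (x0 c : EuclideanSpace ℝ (Fin n))
    (N : EuclideanSpace ℝ (Fin n) → ℝ)
    (hN0 : ∀ x, N x = 0 ↔ x = 0)
    (hNsmul : ∀ (a : ℝ) (x : EuclideanSpace ℝ (Fin n)), N (a • x) = |a| * N x)
    (hNadd : ∀ x y, N (x + y) ≤ N x + N y)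
    (γ : ℝ) (hγ : γ < N c) :
    let D : Set (EuclideanSpace ℝ (Fin n)) := {d | ∀ x ∈ S, ⟪d, x - x0⟫ ≤ 0}
    let K : Set (EuclideanSpace ℝ (Fin n)) := {d | N (c - d) ≤ γ}
    let Kstar : Set (EuclideanSpace ℝ (Fin n)) := {x | ∀ d ∈ K, ⟪d, x0 - x⟫ ≤ 0}
    ((K ∩ D = ∅) ↔ (convexHull ℝ (S ∪ {x0}) ∩ interior Kstar).Nonempty) ∧
    ((K ∩ D = ∅) ↔ ∀ d ∈ D, γ < N (c - d)) := by
  intro D K Kstar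
  let p : Seminorm ℝ (EuclideanSpace ℝ (Fin n)) :=
    Seminorm.of N hNadd fun a x => by rw [hNsmul, Real.norm_eq_abs]
  have hK : K = p.closedBall c γ := by
    ext d
    rw [Seminorm.mem_closedBall, map_sub_rev]
    rfl
  have hK₀ : (0 : EuclideanSpace ℝ (Fin n)) ∉ K := by
    simpa [K] using hγ
  have hD : D = normalCone (convexHull ℝ (S ∪ {x0})) x0 :=
    normalCone_convexHull_union_singleton.symm
  have key := disjoint_normalCone_iff (convex_convexHull ℝ (S ∪ {x0}))
    (subset_convexHull ℝ _ (mem_union_right S (mem_singleton x0)))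
    (hK ▸ p.isCompact_closedBall_of_finiteDimensional (fun x => (hN0 x).1) c γ)
    (hK ▸ p.convex_closedBall c γ) hK₀
  rw [← hD, disjoint_iff_inter_eq_empty] at key
  refine ⟨key, eq_empty_iff_forall_notMem.trans ?_⟩
  exact ⟨fun h d hd => not_le.1 fun hle => h d ⟨hle, hd⟩, fun h d ⟨hle, hd⟩ => (h d hd).not_ge hle⟩

/-- Equivalence of emptiness of K(γ) ∩ D(x⁰), nonemptiness of
conv(S⁺) ∩ interior(K*(γ)), and strict lower bound γ on ‖c − d‖ over D(x⁰). -/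
theorem stmt_0 (n : ℕ) (hn : 1 ≤ n)
    (S : Set (EuclideanSpace ℝ (Fin n))) (hS : S.Nonempty)
    (x0 c : EuclideanSpace ℝ (Fin n))
    (N : EuclideanSpace ℝ (Fin n) → ℝ)
    (hN0 : ∀ x, N x = 0 ↔ x = 0)
    (hNsmul : ∀ (a : ℝ) (x : EuclideanSpace ℝ (Fin n)), N (a • x) = |a| * N x)
    (hNadd : ∀ x y, N (x + y) ≤ N x + N y)
    (γ : ℝ) (hγ0 : 0 ≤ γ) (hγ : γ < N c)
    (hfull : (interior (convexHull ℝ (S ∪ {x0}))).Nonempty) :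
    let D : Set (EuclideanSpace ℝ (Fin n)) := {d | ∀ x ∈ S, ⟪d, x - x0⟫ ≤ 0}
    let K : Set (EuclideanSpace ℝ (Fin n)) := {d | N (c - d) ≤ γ}
    let Kstar : Set (EuclideanSpace ℝ (Fin n)) := {x | ∀ d ∈ K, ⟪d, x0 - x⟫ ≤ 0}
    ((K ∩ D = ∅) ↔ (convexHull ℝ (S ∪ {x0}) ∩ interior Kstar).Nonempty) ∧
    ((K ∩ D = ∅) ↔ ∀ d ∈ D, γ < N (c - d)) :=
  stmt_0_general n S x0 c N hN0 hNsmul hNadd γ hγ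
end

section
/- Let γ ∈ ℝ with 0 ≤ γ < ‖c‖. If there exists a point x̄ ∈ conv(S⁺) ∩ interior(K*(γ)), then K(γ) ∩ D(x⁰) = ∅; that is, every d ∈ ℝⁿ with ‖c − d‖ ≤ γ satisfies ⟪d, x − x⁰⟫ > 0 for some x ∈ S. -/
open scoped RealInnerProductSpace

/-- Key contradiction lemma. -/
lemma stmt_1_aux (n : ℕ)
    (S : Set (EuclideanSpace ℝ (Fin n)))
    (x0 c : EuclideanSpace ℝ (Fin n))
    (N : EuclideanSpace ℝ (Fin n) → ℝ)
    (hN0 : ∀ x, N x = 0 ↔ x = 0)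
    (γ : ℝ) (hγ : γ < N c)
    (xbar : EuclideanSpace ℝ (Fin n))
    (hxbar : xbar ∈ convexHull ℝ (S ∪ {x0}) ∩
      interior {x : EuclideanSpace ℝ (Fin n) |
        ∀ d ∈ {d : EuclideanSpace ℝ (Fin n) | N (c - d) ≤ γ}, ⟪d, x0 - x⟫ ≤ 0})
    (d : EuclideanSpace ℝ (Fin n)) (hd1 : N (c - d) ≤ γ)
    (hd2 : ∀ x ∈ S, ⟪d, x - x0⟫ ≤ 0) : False := by
  obtain ⟨hconv, hint⟩ := hxbar
  -- d ≠ 0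
  have hdne : d ≠ 0 := by
    intro h
    subst h
    simp only [sub_zero] at hd1
    linarith
  have hdnorm : 0 < ‖d‖ := norm_pos_iff.mpr hdne
  -- ⟪d, xbar - x0⟫ ≤ 0 by convexity
  have hlin : IsLinearMap ℝ (fun x : EuclideanSpace ℝ (Fin n) => ⟪d, x⟫) :=
    ⟨fun x y => inner_add_right d x y, fun a x => real_inner_smul_right d x a⟩
  have hcvx : Convex ℝ {x : EuclideanSpace ℝ (Fin n) | ⟪d, x⟫ ≤ ⟪d, x0⟫} :=
    convex_halfSpace_le hlin _
  have hsub : S ∪ {x0} ⊆ {x : EuclideanSpace ℝ (Fin n) | ⟪d, x⟫ ≤ ⟪d, x0⟫} := by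
    rintro x (hx | hx)
    · have := hd2 x hx
      rw [inner_sub_right] at this
      simpa using this
    · simp only [Set.mem_singleton_iff] at hx
      subst hx; exact Set.mem_setOf_eq ▸ le_rfl
  have hxb : ⟪d, xbar⟫ ≤ ⟪d, x0⟫ := convexHull_min hsub hcvx hconv
  -- interior point: get ball
  obtain ⟨ε, hε, hball⟩ := Metric.isOpen_iff.mp isOpen_interior xbar hint
  set x := xbar - (ε / (2 * ‖d‖)) • d with hx
  have hεd : 0 < ε / (2 * ‖d‖) := by positivity
  have hxmem : x ∈ Metric.ball xbar ε := by
    rw [Metric.mem_ball, dist_eq_norm]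
    have : x - xbar = -((ε / (2 * ‖d‖)) • d) := by rw [hx]; abel
    rw [this, norm_neg, norm_smul, Real.norm_eq_abs, abs_of_pos hεd]
    rw [div_mul_eq_mul_div, mul_comm 2 ‖d‖, ← div_div, mul_div_assoc,
      div_self (ne_of_gt hdnorm), mul_one]
    linarith
  have hxK := interior_subset (hball hxmem)
  have hKd := hxK d hd1
  rw [hx] at hKd
  have : ⟪d, x0 - (xbar - (ε / (2 * ‖d‖)) • d)⟫
      = ⟪d, x0⟫ - ⟪d, xbar⟫ + (ε / (2 * ‖d‖)) * ⟪d, d⟫ := by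
    simp only [inner_sub_right, real_inner_smul_right]
    ring
  rw [this] at hKd
  have hdd : 0 < ⟪d, d⟫ := by
    rw [real_inner_self_eq_norm_mul_norm]; positivity
  nlinarith

/-- If conv(S⁺) ∩ interior(K*(γ)) is nonempty then K(γ) ∩ D(x⁰) = ∅,
i.e. every d with ‖c − d‖ ≤ γ violates some inequality ⟪d, x − x⁰⟫ ≤ 0, x ∈ S. -/
theorem stmt_1 (n : ℕ) (hn : 1 ≤ n)
    (S : Set (EuclideanSpace ℝ (Fin n))) (hS : S.Nonempty)
    (x0 c : EuclideanSpace ℝ (Fin n))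
    (N : EuclideanSpace ℝ (Fin n) → ℝ)
    (hN0 : ∀ x, N x = 0 ↔ x = 0)
    (hNsmul : ∀ (a : ℝ) (x : EuclideanSpace ℝ (Fin n)), N (a • x) = |a| * N x)
    (hNadd : ∀ x y, N (x + y) ≤ N x + N y)
    (γ : ℝ) (hγ0 : 0 ≤ γ) (hγ : γ < N c)
    (xbar : EuclideanSpace ℝ (Fin n))
    (hxbar : xbar ∈ convexHull ℝ (S ∪ {x0}) ∩
      interior {x : EuclideanSpace ℝ (Fin n) |
        ∀ d ∈ {d : EuclideanSpace ℝ (Fin n) | N (c - d) ≤ γ}, ⟪d, x0 - x⟫ ≤ 0}) :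
    ({d : EuclideanSpace ℝ (Fin n) | N (c - d) ≤ γ} ∩
      {d : EuclideanSpace ℝ (Fin n) | ∀ x ∈ S, ⟪d, x - x0⟫ ≤ 0} = ∅) ∧
    (∀ d : EuclideanSpace ℝ (Fin n), N (c - d) ≤ γ → ∃ x ∈ S, 0 < ⟪d, x - x0⟫) := by
  constructor
  · ext d
    simp only [Set.mem_inter_iff, Set.mem_setOf_eq, Set.mem_empty_iff_false, iff_false,
      not_and]
    intro hd1 hd2
    exact stmt_1_aux n S x0 c N hN0 γ hγ xbar hxbar d hd1 hd2
  · intro d hd1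
    by_contra h
    push_neg at h
    exact stmt_1_aux n S x0 c N hN0 γ hγ xbar hxbar d hd1 fun x hx => h x hx
end

section
/- Let c ≠ 0, α ∈ ℝ, ε > 0, and suppose x̄ ∈ S satisfies ⟪c, x̄⟫ ≥ α. Define the target vector x' = (α − ε)·c/‖c‖₂². Then x̄ ≠ x', and every d ∈ ℝⁿ satisfying ⟪d, x − x'⟫ ≤ 0 for all x ∈ S (i.e., every d ∈ D(x')) satisfies ‖c − d‖₂ · ‖x' − x̄‖₂ ≥ ε; in particular, ‖c − d‖₂ ≥ ε/‖x' − x̄‖₂ > 0 for all d ∈ D(x'). -/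
open scoped RealInnerProductSpace

/-- With x' = (α − ε)·c/‖c‖², if x̄ ∈ S has ⟪c, x̄⟫ ≥ α then x̄ ≠ x' and
every d ∈ D(x') satisfies ‖c − d‖·‖x' − x̄‖ ≥ ε, hence ‖c − d‖ ≥ ε/‖x' − x̄‖ > 0. -/
theorem stmt_3 (n : ℕ) (hn : 1 ≤ n)
    (S : Set (EuclideanSpace ℝ (Fin n))) (hS : S.Nonempty)
    (c : EuclideanSpace ℝ (Fin n)) (hc : c ≠ 0)
    (α ε : ℝ) (hε : 0 < ε)
    (xbar : EuclideanSpace ℝ (Fin n)) (hxbarS : xbar ∈ S) (hxbar : ⟪c, xbar⟫ ≥ α) :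
    let x' : EuclideanSpace ℝ (Fin n) := ((α - ε) / ‖c‖ ^ 2) • c
    xbar ≠ x' ∧
    ∀ d : EuclideanSpace ℝ (Fin n), (∀ x ∈ S, ⟪d, x - x'⟫ ≤ 0) →
      ‖c - d‖ * ‖x' - xbar‖ ≥ ε ∧ ‖c - d‖ ≥ ε / ‖x' - xbar‖ ∧ 0 < ε / ‖x' - xbar‖ := by
  intro x'
  have hcn : ‖c‖ ≠ 0 := norm_ne_zero_iff.mpr hc
  have hcx' : ⟪c, x'⟫ = α - ε := by
    simp only [x', real_inner_smul_right, real_inner_self_eq_norm_sq]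
    field_simp
  have hkey : ⟪c, xbar - x'⟫ ≥ ε := by
    rw [inner_sub_right, hcx']; linarith
  have hne : xbar ≠ x' := by
    intro h
    rw [h] at hkey
    simp at hkey
    linarith
  refine ⟨hne, fun d hd => ?_⟩
  have hd' : ⟪d, xbar - x'⟫ ≤ 0 := hd xbar hxbarS
  have h1 : ⟪c - d, xbar - x'⟫ ≥ ε := by
    rw [inner_sub_left]; linarith
  have h2 : ‖c - d‖ * ‖xbar - x'‖ ≥ ε :=
    le_trans h1 (real_inner_le_norm _ _)
  have hnormeq : ‖x' - xbar‖ = ‖xbar - x'‖ := norm_sub_rev _ _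
  have hpos : 0 < ‖x' - xbar‖ := by
    rw [hnormeq]; exact norm_sub_pos_iff.mpr hne
  refine ⟨by rw [hnormeq]; exact h2, ?_, div_pos hε hpos⟩
  rw [ge_iff_le, div_le_iff₀ hpos]
  rw [hnormeq]; exact h2
end

section
/- Let W ⊆ ℝⁿ be the direction (translation subspace) of the affine span of S. If the target vector x⁰ lies in the relative interior of conv(S), then D(x⁰) = W^⊥, the orthogonal complement of W; consequently, the orthogonal projection of the estimated objective c onto W^⊥ is the unique minimizer of the Euclidean distance ‖c − d‖₂ over d ∈ D(x⁰). -/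
/-!
Every direction `v` of the affine span of `S` can be followed a little way from a relative
interior point `x⁰` without leaving `conv S`, so a feasible objective `d` satisfies
`t ⟪d, v⟫ = ⟪d, (x⁰ + t v) - x⁰⟫ ≤ 0` for small `t > 0`; applied to `v` and `-v` this forces
`d ⟂ W`. Conversely every `x - x⁰` with `x ∈ S` lies in `W`. Once `D(x⁰) = Wᗮ`, the claim is the
characterisation of the orthogonal projection as the nearest point, via Pythagoras.
-/

open Filter Topology
open scoped RealInnerProductSpace

section IntrinsicInterior

variable {E : Type*} [TopologicalSpace E] [AddCommGroup E] [Module ℝ E]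
  [IsTopologicalAddGroup E] [ContinuousSMul ℝ E]

theorem eventually_add_smul_mem_of_mem_intrinsicInterior {s : Set E} {x v : E}
    (hx : x ∈ intrinsicInterior ℝ s) (hv : v ∈ (affineSpan ℝ s).direction) :
    ∀ᶠ t : ℝ in 𝓝 0, x + t • v ∈ s := by
  obtain ⟨y, hy, rfl⟩ := mem_intrinsicInterior.1 hx
  have hline : ∀ t : ℝ, (y : E) + t • v ∈ affineSpan ℝ s := fun t => by
    simpa [add_comm] using AffineSubspace.vadd_mem_of_mem_direction
      (Submodule.smul_mem _ t hv) y.2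
  let line : ℝ → affineSpan ℝ s := fun t => ⟨y + t • v, hline t⟩
  have hline_cont : Continuous line :=
    (continuous_const.add (continuous_id.smul continuous_const)).subtype_mk _
  have hline_zero : line 0 = y := by ext; simp [line]
  have hnhds : interior ((↑) ⁻¹' s) ∈ 𝓝 (line 0) := by
    rw [hline_zero]; exact isOpen_interior.mem_nhds hy
  filter_upwards [hline_cont.continuousAt.preimage_mem_nhds hnhds] with t ht
  exact interior_subset (s := ((↑) : affineSpan ℝ s → E) ⁻¹' s) ht

end IntrinsicInterior

section InnerProductSpace

variable {E : Type*} [NormedAddCommGroup E] [InnerProductSpace ℝ E]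

theorem inner_sub_nonpos_of_mem_convexHull {S : Set E} {x₀ d : E}
    (hd : ∀ x ∈ S, ⟪d, x - x₀⟫ ≤ 0) : ∀ z ∈ convexHull ℝ S, ⟪d, z - x₀⟫ ≤ 0 := by
  simp only [inner_sub_right, sub_nonpos] at hd ⊢
  exact convexHull_min hd (convex_halfSpace_le (innerₛₗ ℝ d).isLinear _)

theorem inner_nonpos_of_mem_direction_of_mem_intrinsicInterior {C : Set E} {x₀ d v : E}
    (hx₀ : x₀ ∈ intrinsicInterior ℝ C) (hd : ∀ z ∈ C, ⟪d, z - x₀⟫ ≤ 0)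
    (hv : v ∈ (affineSpan ℝ C).direction) : ⟪d, v⟫ ≤ 0 := by
  obtain ⟨t, ht, hmem⟩ := (eventually_add_smul_mem_of_mem_intrinsicInterior hx₀ hv).exists_gt
  have : t * ⟪d, v⟫ ≤ 0 := by
    simpa [real_inner_smul_right] using hd _ hmem
  exact nonpos_of_mul_nonpos_right this ht

theorem Submodule.mem_orthogonal_of_inner_nonpos {K : Submodule ℝ E} {d : E}
    (hd : ∀ v ∈ K, ⟪d, v⟫ ≤ 0) : d ∈ Kᗮ := by
  refine (Submodule.mem_orthogonal' K d).2 fun v hv => le_antisymm (hd v hv) ?_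
  simpa using hd (-v) (K.neg_mem hv)

theorem setOf_inner_sub_nonpos_eq_orthogonal {S : Set E} {x₀ : E}
    (hx₀ : x₀ ∈ intrinsicInterior ℝ (convexHull ℝ S)) :
    {d | ∀ x ∈ S, ⟪d, x - x₀⟫ ≤ 0} = ((affineSpan ℝ S).directionᗮ : Set E) := by
  have hx₀S : x₀ ∈ affineSpan ℝ S := by
    simpa [affineSpan_convexHull] using
      subset_affineSpan ℝ _ (intrinsicInterior_subset hx₀)
  ext d
  constructor
  · intro hd
    refine Submodule.mem_orthogonal_of_inner_nonpos fun v hv => ?_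
    rw [← affineSpan_convexHull] at hv
    exact inner_nonpos_of_mem_direction_of_mem_intrinsicInterior hx₀
      (inner_sub_nonpos_of_mem_convexHull hd) hv
  · intro hd x hx
    have hdir : x - x₀ ∈ (affineSpan ℝ S).direction :=
      AffineSubspace.vsub_mem_direction (subset_affineSpan ℝ S hx) hx₀S
    exact ((Submodule.mem_orthogonal' _ d).1 hd _ hdir).le

variable {K : Submodule ℝ E} [K.HasOrthogonalProjection]

theorem Submodule.norm_sub_sq_eq_norm_sub_starProjection_sq_add (c : E) {d : E} (hd : d ∈ K) :
    ‖c - d‖ ^ 2 = ‖c - K.starProjection c‖ ^ 2 + ‖K.starProjection c - d‖ ^ 2 := by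
  have horth : ⟪c - K.starProjection c, K.starProjection c - d⟫ = 0 :=
    (Submodule.mem_orthogonal' K _).1 (K.sub_starProjection_mem_orthogonal c) _
      (K.sub_mem (K.starProjection_apply_mem c) hd)
  rw [← sub_add_sub_cancel c (K.starProjection c) d, norm_add_sq_real, horth]
  ring

theorem Submodule.norm_sub_starProjection_le (c : E) {d : E} (hd : d ∈ K) :
    ‖c - K.starProjection c‖ ≤ ‖c - d‖ := by
  have := K.norm_sub_sq_eq_norm_sub_starProjection_sq_add c hd
  nlinarith [norm_nonneg (c - K.starProjection c), norm_nonneg (c - d),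
    sq_nonneg ‖K.starProjection c - d‖]

theorem Submodule.eq_starProjection_of_norm_sub_eq (c : E) {d : E} (hd : d ∈ K)
    (heq : ‖c - d‖ = ‖c - K.starProjection c‖) : d = K.starProjection c := by
  have := K.norm_sub_sq_eq_norm_sub_starProjection_sq_add c hd
  rw [heq, left_eq_add, sq_eq_zero_iff, norm_eq_zero, sub_eq_zero] at this
  exact this.symm

end InnerProductSpace

theorem stmt_8_general (n : ℕ)
    (S : Set (EuclideanSpace ℝ (Fin n)))
    (x0 c : EuclideanSpace ℝ (Fin n))
    (hx0 : x0 ∈ intrinsicInterior ℝ (convexHull ℝ S)) :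
    let W : Submodule ℝ (EuclideanSpace ℝ (Fin n)) := (affineSpan ℝ S).direction
    let D : Set (EuclideanSpace ℝ (Fin n)) := {d | ∀ x ∈ S, ⟪d, x - x0⟫ ≤ 0}
    let p : EuclideanSpace ℝ (Fin n) := (Submodule.orthogonalProjection Wᗮ c : EuclideanSpace ℝ (Fin n))
    D = (Wᗮ : Set (EuclideanSpace ℝ (Fin n))) ∧
    p ∈ D ∧ (∀ d ∈ D, ‖c - p‖ ≤ ‖c - d‖) ∧ (∀ d ∈ D, ‖c - d‖ = ‖c - p‖ → d = p) := by
  intro W D p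
  have hD : D = (Wᗮ : Set _) := setOf_inner_sub_nonpos_eq_orthogonal hx0
  have hp : p = Wᗮ.starProjection c := (Wᗮ.starProjection_apply c).symm
  rw [hD, hp]
  exact ⟨rfl, Wᗮ.starProjection_apply_mem c, fun _ hd => Wᗮ.norm_sub_starProjection_le c hd,
    fun _ hd => Wᗮ.eq_starProjection_of_norm_sub_eq c hd⟩

/-- If x⁰ is in the relative interior of conv(S), then D(x⁰) = W^⊥
(W the direction of the affine span of S) and the orthogonal projection of c onto
W^⊥ is the unique minimizer of ‖c − d‖ over D(x⁰). -/
theorem stmt_8 (n : ℕ) (hn : 1 ≤ n)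
    (S : Set (EuclideanSpace ℝ (Fin n))) (hS : S.Nonempty)
    (x0 c : EuclideanSpace ℝ (Fin n))
    (hx0 : x0 ∈ intrinsicInterior ℝ (convexHull ℝ S)) :
    let W : Submodule ℝ (EuclideanSpace ℝ (Fin n)) := (affineSpan ℝ S).direction
    let D : Set (EuclideanSpace ℝ (Fin n)) := {d | ∀ x ∈ S, ⟪d, x - x0⟫ ≤ 0}
    let p : EuclideanSpace ℝ (Fin n) := (Submodule.orthogonalProjection Wᗮ c : EuclideanSpace ℝ (Fin n))
    D = (Wᗮ : Set (EuclideanSpace ℝ (Fin n))) ∧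
    p ∈ D ∧ (∀ d ∈ D, ‖c - p‖ ≤ ‖c - d‖) ∧ (∀ d ∈ D, ‖c - d‖ = ‖c - p‖ → d = p) :=
  stmt_8_general n S x0 c hx0
end

section
/- Suppose E, R ⊆ ℝⁿ with E nonempty and conv(S) = conv(E) + cone(R), where cone(R) is the conic hull of R (the smallest convex cone containing 0 and R). Then D(x⁰) = {d ∈ ℝⁿ : ⟪d, v − x⁰⟫ ≤ 0 for all v ∈ E, and ⟪d, r⟫ ≤ 0 for all r ∈ R}; i.e., the infinitely many constraints over S defining the feasible objectives can be replaced by the constraints corresponding to the generators E and the rays R. -/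
open scoped RealInnerProductSpace Pointwise

/-- The conic hull of a set `T`: the smallest convex cone containing `0` and `T`. -/
def coneHull {n : ℕ} (T : Set (EuclideanSpace ℝ (Fin n))) : Set (EuclideanSpace ℝ (Fin n)) :=
  ⋂₀ {C : Set (EuclideanSpace ℝ (Fin n)) |
      (0 : EuclideanSpace ℝ (Fin n)) ∈ C ∧ T ⊆ C ∧
      (∀ (a : ℝ), 0 ≤ a → ∀ y ∈ C, a • y ∈ C) ∧
      (∀ y ∈ C, ∀ z ∈ C, y + z ∈ C)}

/-- If conv(S) = conv(E) + cone(R) with E nonempty, then D(x⁰) is cut out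
by the finite-type constraints from the generators E and the rays R. -/
theorem stmt_9 (n : ℕ) (hn : 1 ≤ n)
    (S : Set (EuclideanSpace ℝ (Fin n))) (hS : S.Nonempty)
    (x0 : EuclideanSpace ℝ (Fin n))
    (E R : Set (EuclideanSpace ℝ (Fin n))) (hE : E.Nonempty)
    (hrep : convexHull ℝ S = convexHull ℝ E + coneHull R) :
    {d : EuclideanSpace ℝ (Fin n) | ∀ x ∈ S, ⟪d, x - x0⟫ ≤ 0} =
    {d : EuclideanSpace ℝ (Fin n) |
      (∀ v ∈ E, ⟪d, v - x0⟫ ≤ 0) ∧ (∀ r ∈ R, ⟪d, r⟫ ≤ 0)} := by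
  have hzero : ∀ (T : Set (EuclideanSpace ℝ (Fin n))), (0 : EuclideanSpace ℝ (Fin n)) ∈ coneHull T := by
    intro T C hC
    exact hC.1
  have hsmulmem : ∀ (T : Set (EuclideanSpace ℝ (Fin n))) (a : ℝ), 0 ≤ a → ∀ r ∈ T,
      a • r ∈ coneHull T := by
    intro T a ha r hr C hC
    exact hC.2.2.1 a ha r (hC.2.1 hr)
  ext d
  simp only [Set.mem_setOf_eq]
  constructor
  · intro h
    -- conv S is in the halfspace
    have hlin : IsLinearMap ℝ (fun x : EuclideanSpace ℝ (Fin n) => ⟪d, x⟫) :=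
      ⟨fun x y => inner_add_right _ _ _, fun c x => real_inner_smul_right _ _ _⟩
    have hconv : ∀ x ∈ convexHull ℝ S, ⟪d, x - x0⟫ ≤ 0 := by
      intro x hx
      have hsub : convexHull ℝ S ⊆ {x | ⟪d, x⟫ ≤ ⟪d, x0⟫} := by
        apply convexHull_min _ (convex_halfSpace_le hlin _)
        intro y hy
        have := h y hy
        rw [inner_sub_right] at this
        simpa using this
      have := hsub hx
      rw [inner_sub_right]
      simpa using this
    constructor
    · intro v hv
      apply hconv
      rw [hrep]
      exact ⟨v, subset_convexHull ℝ E hv, 0, hzero R, by simp⟩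
    · intro r hr
      obtain ⟨v0, hv0⟩ := hE
      have key : ∀ t : ℝ, 0 ≤ t → ⟪d, v0 + t • r - x0⟫ ≤ 0 := by
        intro t ht
        apply hconv
        rw [hrep]
        exact ⟨v0, subset_convexHull ℝ E hv0, t • r, hsmulmem R t ht r hr, rfl⟩
      by_contra hpos
      push_neg at hpos
      set c : ℝ := -⟪d, v0 - x0⟫ with hc
      have hc0 : 0 ≤ c := by
        have := key 0 le_rfl
        simp only [zero_smul, add_zero] at this
        linarith
      have := key ((c + 1) / ⟪d, r⟫) (by positivity)
      have hexp : v0 + ((c + 1) / ⟪d, r⟫) • r - x0 = (v0 - x0) + ((c + 1) / ⟪d, r⟫) • r := by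
        abel
      rw [hexp, inner_add_right, real_inner_smul_right] at this
      rw [div_mul_cancel₀ _ (ne_of_gt hpos)] at this
      linarith
  · rintro ⟨hEc, hRc⟩ x hx
    have hx' : x ∈ convexHull ℝ E + coneHull R := by
      rw [← hrep]
      exact subset_convexHull ℝ S hx
    obtain ⟨v, hv, r, hr, rfl⟩ := hx'
    have hlin : IsLinearMap ℝ (fun x : EuclideanSpace ℝ (Fin n) => ⟪d, x⟫) :=
      ⟨fun x y => inner_add_right _ _ _, fun c x => real_inner_smul_right _ _ _⟩
    have hvle : ⟪d, v - x0⟫ ≤ 0 := by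
      have hsub : convexHull ℝ E ⊆ {x | ⟪d, x⟫ ≤ ⟪d, x0⟫} := by
        apply convexHull_min _ (convex_halfSpace_le hlin _)
        intro y hy
        have := hEc y hy
        rw [inner_sub_right] at this
        simpa using this
      have := hsub hv
      rw [inner_sub_right]
      simpa using this
    have hrle : ⟪d, r⟫ ≤ 0 := by
      have : r ∈ {y : EuclideanSpace ℝ (Fin n) | ⟪d, y⟫ ≤ 0} := by
        apply hr
        refine ⟨by simp, fun y hy => hRc y hy, ?_, ?_⟩
        · intro a ha y hy
          simp only [Set.mem_setOf_eq, real_inner_smul_right] at *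
          exact mul_nonpos_of_nonneg_of_nonpos ha hy
        · intro y hy z hz
          simp only [Set.mem_setOf_eq, inner_add_right] at *
          linarith
      exact this
    have hexp : v + r - x0 = (v - x0) + r := by abel
    rw [hexp, inner_add_right]
    linarith
end

section
/- Suppose 0 lies in the interior of conv(S), and define the 1-polar P¹ = {d ∈ ℝⁿ : ⟪d, x⟫ ≤ 1 for all x ∈ S}. Then D(x⁰) \ {0} = {ρ·d : ρ > 0, d ∈ P¹, ⟪d, x⁰⟫ ≥ 1}; i.e., the nonzero feasible objectives of the inverse problem are exactly the positive scalings of points of the 1-polar whose value at the target vector x⁰ is at least 1. -/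
open scoped RealInnerProductSpace

/-- If 0 ∈ interior(conv(S)), the nonzero feasible objectives are exactly
the positive scalings of points of the 1-polar P¹ whose value at x⁰ is at least 1. -/
theorem stmt_10 (n : ℕ) (hn : 1 ≤ n)
    (S : Set (EuclideanSpace ℝ (Fin n))) (hS : S.Nonempty)
    (x0 : EuclideanSpace ℝ (Fin n))
    (h0 : (0 : EuclideanSpace ℝ (Fin n)) ∈ interior (convexHull ℝ S)) :
    let P1 : Set (EuclideanSpace ℝ (Fin n)) := {d | ∀ x ∈ S, ⟪d, x⟫ ≤ 1}
    let D : Set (EuclideanSpace ℝ (Fin n)) := {d | ∀ x ∈ S, ⟪d, x - x0⟫ ≤ 0}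
    D \ {0} = {e : EuclideanSpace ℝ (Fin n) |
      ∃ ρ : ℝ, 0 < ρ ∧ ∃ d ∈ P1, ⟪d, x0⟫ ≥ 1 ∧ e = ρ • d} := by
  intro P1 D
  ext e
  simp only [Set.mem_diff, Set.mem_setOf_eq, Set.mem_singleton_iff]
  constructor
  · rintro ⟨hD, hne⟩
    -- all x ∈ S satisfy ⟪e, x⟫ ≤ ⟪e, x0⟫, hence so does conv S
    have hbd : ∀ x ∈ S, ⟪e, x⟫ ≤ ⟪e, x0⟫ := by
      intro x hx
      have := hD x hx
      rw [inner_sub_right] at this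
      linarith
    have hconv : ∀ y ∈ convexHull ℝ S, ⟪e, y⟫ ≤ ⟪e, x0⟫ := by
      intro y hy
      have hcvx : Convex ℝ {y : EuclideanSpace ℝ (Fin n) | ⟪e, y⟫ ≤ ⟪e, x0⟫} :=
        convex_halfSpace_le ⟨fun a b => inner_add_right _ _ _, fun c a => inner_smul_right _ _ _⟩ _
      exact convexHull_min hbd hcvx hy
    -- find a point of conv S with positive inner product with e
    obtain ⟨ε, hε, hball⟩ := Metric.isOpen_iff.mp isOpen_interior 0 h0
    have hne' : ‖e‖ ≠ 0 := norm_ne_zero_iff.mpr hne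
    have hnpos : (0:ℝ) < ‖e‖ := norm_pos_iff.mpr hne
    set y : EuclideanSpace ℝ (Fin n) := (ε / (2 * ‖e‖)) • e with hy
    have hymem : y ∈ convexHull ℝ S := by
      apply interior_subset
      apply hball
      simp only [Metric.mem_ball, dist_zero_right, hy, norm_smul, Real.norm_eq_abs]
      rw [abs_of_pos (by positivity)]
      have heq : ‖e‖ * (ε / (2 * ‖e‖)) = ε / 2 := by
        field_simp
      linarith [heq, mul_comm ‖e‖ (ε / (2 * ‖e‖))]
    have hypos : (0:ℝ) < ⟪e, y⟫ := by
      rw [hy, inner_smul_right, real_inner_self_eq_norm_sq]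
      positivity
    have hc : (0:ℝ) < ⟪e, x0⟫ := lt_of_lt_of_le hypos (hconv y hymem)
    refine ⟨⟪e, x0⟫, hc, (⟪e, x0⟫)⁻¹ • e, ?_, ?_, ?_⟩
    · intro x hx
      rw [inner_smul_left]
      have := hbd x hx
      rw [RCLike.conj_to_real]
      rw [inv_mul_le_iff₀ hc]
      linarith
    · rw [inner_smul_left, RCLike.conj_to_real, inv_mul_cancel₀ (ne_of_gt hc)]
    · rw [smul_smul, mul_inv_cancel₀ (ne_of_gt hc), one_smul]
  · rintro ⟨ρ, hρ, d, hd, hdx0, rfl⟩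
    constructor
    · intro x hx
      rw [inner_smul_left, RCLike.conj_to_real, inner_sub_right]
      have h1 := hd x hx
      nlinarith
    · intro h
      have hd0 : d = 0 := by
        rcases smul_eq_zero.mp h with h' | h'
        · exact absurd h' (ne_of_gt hρ)
        · exact h'
      rw [hd0, inner_zero_left] at hdx0
      linarith
end

section
/- (Correctness of the cutting-plane termination criterion.) Let E ⊆ S and define the relaxed feasible set D_E(x⁰) = {d ∈ ℝⁿ : ⟪d, x − x⁰⟫ ≤ 0 for all x ∈ E}. Suppose d* minimizes ‖c − d‖ over d ∈ D_E(x⁰), and suppose there exists x̂ ∈ S attaining max_{x ∈ S} ⟪d*, x⟫ with ⟪d*, x̂ − x⁰⟫ ≤ 0. Then d* ∈ D(x⁰) and d* minimizes ‖c − d‖ over d ∈ D(x⁰). -/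
open scoped RealInnerProductSpace

/-- Correctness of the cutting-plane termination criterion: if d* is
optimal for the relaxation over E ⊆ S and the forward problem with objective d* has a
maximizer x̂ ∈ S with ⟪d*, x̂ − x⁰⟫ ≤ 0, then d* is optimal for the full inverse problem. -/
theorem stmt_11 (n : ℕ) (hn : 1 ≤ n)
    (S : Set (EuclideanSpace ℝ (Fin n))) (hS : S.Nonempty)
    (x0 c : EuclideanSpace ℝ (Fin n))
    (N : EuclideanSpace ℝ (Fin n) → ℝ)
    (hN0 : ∀ x, N x = 0 ↔ x = 0)
    (hNsmul : ∀ (a : ℝ) (x : EuclideanSpace ℝ (Fin n)), N (a • x) = |a| * N x)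
    (hNadd : ∀ x y, N (x + y) ≤ N x + N y)
    (E : Set (EuclideanSpace ℝ (Fin n))) (hE : E ⊆ S)
    (dstar : EuclideanSpace ℝ (Fin n))
    (hdstarFeas : ∀ x ∈ E, ⟪dstar, x - x0⟫ ≤ 0)
    (hdstarOpt : ∀ d : EuclideanSpace ℝ (Fin n),
      (∀ x ∈ E, ⟪d, x - x0⟫ ≤ 0) → N (c - dstar) ≤ N (c - d))
    (xhat : EuclideanSpace ℝ (Fin n)) (hxhatS : xhat ∈ S)
    (hxhatMax : ∀ x ∈ S, ⟪dstar, x⟫ ≤ ⟪dstar, xhat⟫)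
    (hterm : ⟪dstar, xhat - x0⟫ ≤ 0) :
    (∀ x ∈ S, ⟪dstar, x - x0⟫ ≤ 0) ∧
    (∀ d : EuclideanSpace ℝ (Fin n),
      (∀ x ∈ S, ⟪d, x - x0⟫ ≤ 0) → N (c - dstar) ≤ N (c - d)) := by
  constructor
  · intro x hx
    have h1 := hxhatMax x hx
    have h2 : ⟪dstar, x - x0⟫ ≤ ⟪dstar, xhat - x0⟫ := by
      rw [inner_sub_right, inner_sub_right]; linarith
    linarith
  · intro d hd
    exact hdstarOpt d fun x hx => hd x (hE hx)
end

section
/- If 0 ≤ γ < ‖c‖₂, then the point x⁰ + c lies in the interior of K*(γ); in particular, interior(K*(γ)) is nonempty whenever γ is strictly less than the norm of the estimated objective c. -/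
open scoped RealInnerProductSpace

/-- If 0 ≤ γ < ‖c‖₂, then x⁰ + c lies in the interior of K*(γ); in
particular, interior(K*(γ)) is nonempty. -/
theorem stmt_14 (n : ℕ) (hn : 1 ≤ n)
    (x0 c : EuclideanSpace ℝ (Fin n))
    (γ : ℝ) (hγ0 : 0 ≤ γ) (hγ : γ < ‖c‖) :
    let K : Set (EuclideanSpace ℝ (Fin n)) := {d | ‖c - d‖ ≤ γ}
    let Kstar : Set (EuclideanSpace ℝ (Fin n)) := {x | ∀ d ∈ K, ⟪d, x0 - x⟫ ≤ 0}
    x0 + c ∈ interior Kstar ∧ (interior Kstar).Nonempty := by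
  intro K Kstar
  have hc : 0 < ‖c‖ := lt_of_le_of_lt hγ0 hγ
  set r : ℝ := ‖c‖ * (‖c‖ - γ) / (‖c‖ + γ + 1) with hr_def
  have hr : 0 < r := by
    apply div_pos
    · exact mul_pos hc (by linarith)
    · linarith
  have key : Metric.ball (x0 + c) r ⊆ Kstar := by
    intro x hx d hd
    simp only [Metric.mem_ball, dist_eq_norm] at hx
    have hd' : ‖c - d‖ ≤ γ := hd
    set v : EuclideanSpace ℝ (Fin n) := x - (x0 + c) with hv_def
    have hvx : x0 - x = -(c + v) := by
      simp [hv_def]; abel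
    rw [hvx, inner_neg_right]
    have h1 : ⟪c - d, c + v⟫ ≤ γ * (‖c‖ + ‖v‖) := by
      calc ⟪c - d, c + v⟫ ≤ ‖c - d‖ * ‖c + v‖ := real_inner_le_norm _ _
        _ ≤ γ * (‖c‖ + ‖v‖) := by
            apply mul_le_mul hd' (norm_add_le _ _) (norm_nonneg _) hγ0
    have h2 : -(‖c‖ * ‖v‖) ≤ ⟪c, v⟫ := by
      have := abs_real_inner_le_norm c v
      rw [abs_le] at this; exact this.1
    have h3 : ⟪d, c + v⟫ = ⟪c, c⟫ + ⟪c, v⟫ - ⟪c - d, c + v⟫ := by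
      simp [inner_sub_left, inner_add_right]; ring
    have hcc : ⟪c, c⟫ = ‖c‖ * ‖c‖ := real_inner_self_eq_norm_mul_norm c
    have hv : ‖v‖ < r := hx
    have hbound : ‖v‖ * (‖c‖ + γ + 1) < ‖c‖ * (‖c‖ - γ) := by
      have : ‖v‖ * (‖c‖ + γ + 1) < r * (‖c‖ + γ + 1) := by
        apply mul_lt_mul_of_pos_right hv (by linarith)
      rwa [hr_def, div_mul_cancel₀] at this
      linarith
    have hvnn : 0 ≤ ‖v‖ := norm_nonneg v
    have : 0 ≤ ⟪d, c + v⟫ := by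
      rw [h3, hcc]; nlinarith
    linarith
  have hmem : x0 + c ∈ interior Kstar :=
    mem_interior.mpr ⟨Metric.ball (x0 + c) r, key, Metric.isOpen_ball, Metric.mem_ball_self hr⟩
  exact ⟨hmem, ⟨_, hmem⟩⟩
end
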